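/- For 0 < θ < π/2 there is a constant C > 0 (depending on θ) such that the Mellin transform of m_{±θ}(λ) = exp(−e^{±iθ}λ) − exp(−λ) satisfies |[ℳ m_{±θ}](u)| ≤ C (1 + |u|)^{1/2} exp((θ − π/2)|u|) for all u ∈ ℝ. -/

import Mathlib

/-!
Write `m_w(λ) = e^{-wλ} - e^{-λ}`, so the theorem concerns `w = e^{±iθ}`. Differentiating under
the integral, `d/dw [ℳ m_w](u) = -∫ e^{-wλ} λ^{-iu} dλ`, which for real `w > 0` is the Gamma
integral `-w^{iu-1} Γ(1-iu)`; this is also the derivative of `(w^{iu} - 1) Γ(-iu)`, and both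
functions vanish at `w = 1`. Hence `[ℳ m_w](u) = (w^{iu} - 1) Γ(-iu)` for `w > 0`, and by analytic
continuation for `Re w > 0`. For `w = e^{±iθ}` we get `w^{iu} = e^{∓θu}`, and the reflection
formula `|Γ(iu)|² = π / (u sinh πu)` with `|e^x - 1| ≤ |x| e^{|x|}` gives the bound. At `u = 0`,
where `Γ(-iu)` has a pole, the crude estimate `|m_w(λ)| ≤ |w - 1| λ e^{-min(Re w, 1) λ}` is used.
-/

open MeasureTheory Complex Real Set Filter Topology

lemma norm_cexp_neg_mul_ofReal (w : ℂ) (l : ℝ) : ‖cexp (-w * l)‖ = rexp (-w.re * l) := by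
  simp [norm_exp, mul_re]

lemma norm_ofReal_cpow_neg_mul_I (u : ℝ) {l : ℝ} (hl : 0 < l) : ‖(l : ℂ) ^ (-(u : ℂ) * I)‖ = 1 := by
  simp [norm_cpow_eq_rpow_re_of_pos hl]

lemma continuousOn_ofReal_cpow (s : ℂ) : ContinuousOn (fun l : ℝ => (l : ℂ) ^ s) (Ioi 0) :=
  fun _ hl => ((continuousAt_cpow_const (ofReal_mem_slitPlane.2 hl)).comp
    continuous_ofReal.continuousAt).continuousWithinAt

lemma norm_cexp_neg_mul_sub_le {c l : ℝ} {w₁ w₂ : ℂ} (h₁ : c ≤ w₁.re) (h₂ : c ≤ w₂.re)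
    (hl : 0 ≤ l) : ‖cexp (-w₁ * l) - cexp (-w₂ * l)‖ ≤ l * rexp (-c * l) * ‖w₁ - w₂‖ := by
  refine (convex_halfSpace_re_ge c).norm_image_sub_le_of_norm_hasDerivWithin_le
    (f := fun w : ℂ => cexp (-w * l)) (f' := fun w => cexp (-w * l) * (-1 * l))
    (fun w _ => ?_) (fun w hw => ?_) h₂ h₁
  · exact (((hasDerivAt_id w).neg.mul_const (l : ℂ)).cexp).hasDerivWithinAt
  · rw [norm_mul, norm_cexp_neg_mul_ofReal, mul_comm]
    simp only [neg_mul, one_mul, norm_neg, norm_real, Real.norm_eq_abs, abs_of_nonneg hl]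
    exact mul_le_mul_of_nonneg_left (exp_le_exp.2 (by nlinarith [show c ≤ w.re from hw])) hl

lemma abs_exp_sub_one_le_abs_mul_exp_abs (x : ℝ) : |rexp x - 1| ≤ |x| * rexp |x| := by
  rcases le_total 0 x with hx | hx
  · rw [abs_of_nonneg hx, abs_of_nonneg (by linarith [add_one_le_exp x])]
    nlinarith [add_one_le_exp (-x), exp_pos x, Real.exp_neg x, mul_inv_cancel₀ (exp_pos x).ne']
  · rw [abs_of_nonpos hx, abs_of_nonpos (by linarith [exp_le_one_iff.2 hx])]
    nlinarith [add_one_le_exp x, one_le_exp (neg_nonneg.2 hx)]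

noncomputable def mellinExpSub (w : ℂ) (u : ℝ) : ℂ :=
  ∫ l in Ioi (0 : ℝ), (cexp (-w * l) - cexp (-l)) * (l : ℂ) ^ (-(u : ℂ) * I) / l

lemma norm_mellinExpSub_integrand_le (w : ℂ) (u : ℝ) {l : ℝ} (hl : 0 < l) :
    ‖(cexp (-w * l) - cexp (-l)) * (l : ℂ) ^ (-(u : ℂ) * I) / l‖ ≤
      ‖w - 1‖ * rexp (-min w.re 1 * l) := by
  have hexp := norm_cexp_neg_mul_sub_le (min_le_left w.re 1) (by simp) hl.le (w₂ := 1)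
  rw [neg_one_mul] at hexp
  rw [norm_div, norm_mul, norm_ofReal_cpow_neg_mul_I u hl, mul_one, norm_real,
    Real.norm_eq_abs, abs_of_pos hl, div_le_iff₀ hl]
  linarith

lemma continuousOn_mellinExpSub_integrand (w : ℂ) (u : ℝ) :
    ContinuousOn (fun l : ℝ => (cexp (-w * l) - cexp (-l)) * (l : ℂ) ^ (-(u : ℂ) * I) / l)
      (Ioi 0) :=
  (((by fun_prop : Continuous fun l : ℝ => cexp (-w * l) - cexp (-l)).continuousOn).mul
    (continuousOn_ofReal_cpow _)).div continuous_ofReal.continuousOn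
    fun _ hl => ofReal_ne_zero.2 (ne_of_gt hl)

lemma integrableOn_mellinExpSub_integrand {w : ℂ} (hw : 0 < w.re) (u : ℝ) :
    IntegrableOn (fun l : ℝ => (cexp (-w * l) - cexp (-l)) * (l : ℂ) ^ (-(u : ℂ) * I) / l)
      (Ioi 0) :=
  ((exp_neg_integrableOn_Ioi 0 (lt_min hw one_pos)).const_mul _).mono'
    ((continuousOn_mellinExpSub_integrand w u).aestronglyMeasurable measurableSet_Ioi)
    ((ae_restrict_iff' measurableSet_Ioi).2 (.of_forall fun _ hl =>
      norm_mellinExpSub_integrand_le w u hl))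

lemma norm_mellinExpSub_le {w : ℂ} (hw : 0 < w.re) (u : ℝ) :
    ‖mellinExpSub w u‖ ≤ ‖w - 1‖ / min w.re 1 := by
  have hc : 0 < min w.re 1 := lt_min hw one_pos
  calc ‖mellinExpSub w u‖
      ≤ ∫ l in Ioi (0 : ℝ), ‖w - 1‖ * rexp (-min w.re 1 * l) :=
        (norm_integral_le_integral_norm _).trans <| setIntegral_mono_on
          (integrableOn_mellinExpSub_integrand hw u).norm
          ((exp_neg_integrableOn_Ioi 0 hc).const_mul _) measurableSet_Ioi
          fun _ hl => norm_mellinExpSub_integrand_le w u hl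
    _ = ‖w - 1‖ / min w.re 1 := by
        rw [integral_const_mul, integral_exp_mul_Ioi (neg_neg_of_pos hc), mul_zero,
          Real.exp_zero]
        ring

lemma div_two_le_re_of_mem_ball {w₀ w : ℂ} (hw : w ∈ Metric.ball w₀ (w₀.re / 2)) :
    w₀.re / 2 ≤ w.re := by
  have := (abs_re_le_norm (w - w₀)).trans (mem_ball_iff_norm.1 hw).le
  rw [sub_re] at this
  linarith [abs_le.1 this]

lemma hasDerivAt_mellinExpSub {w₀ : ℂ} (hw₀ : 0 < w₀.re) (u : ℝ) :
    HasDerivAt (fun w => mellinExpSub w u)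
      (∫ l in Ioi (0 : ℝ), -(cexp (-w₀ * l) * (l : ℂ) ^ (-(u : ℂ) * I))) w₀ := by
  have hc : 0 < w₀.re / 2 := half_pos hw₀
  refine (hasDerivAt_integral_of_dominated_loc_of_deriv_le
    (F' := fun w (l : ℝ) => -(cexp (-w * l) * (l : ℂ) ^ (-(u : ℂ) * I)))
    (bound := fun l => rexp (-(w₀.re / 2) * l)) (Metric.ball_mem_nhds w₀ hc)
    (.of_forall fun w => (continuousOn_mellinExpSub_integrand w u).aestronglyMeasurable
      measurableSet_Ioi)
    (integrableOn_mellinExpSub_integrand hw₀ u)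
    ((((by fun_prop : Continuous fun l : ℝ => cexp (-w₀ * l)).continuousOn.mul
      (continuousOn_ofReal_cpow _)).neg).aestronglyMeasurable measurableSet_Ioi)
    ((ae_restrict_iff' measurableSet_Ioi).2 (.of_forall fun l hl w hw => ?_))
    (exp_neg_integrableOn_Ioi 0 hc)
    ((ae_restrict_iff' measurableSet_Ioi).2 (.of_forall fun l hl w _ => ?_))).2
  · rw [norm_neg, norm_mul, norm_ofReal_cpow_neg_mul_I u hl, mul_one, norm_cexp_neg_mul_ofReal]
    exact exp_le_exp.2 (by nlinarith [div_two_le_re_of_mem_ball hw, show (0 : ℝ) < l from hl])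
  · have hl : (l : ℂ) ≠ 0 := ofReal_ne_zero.2 (ne_of_gt hl)
    have h := ((((hasDerivAt_neg w).mul_const (l : ℂ)).cexp.sub_const (cexp (-l))).mul_const
      ((l : ℂ) ^ (-(u : ℂ) * I))).div_const (l : ℂ)
    refine h.congr_deriv ?_
    field_simp

lemma integral_cexp_neg_mul_ofReal_cpow {r : ℝ} (hr : 0 < r) (u : ℝ) :
    ∫ l in Ioi (0 : ℝ), cexp (-r * l) * (l : ℂ) ^ (-(u : ℂ) * I) =
      (r : ℂ) ^ ((u : ℂ) * I - 1) * Gamma (1 - u * I) := by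
  have h := integral_cpow_mul_exp_neg_mul_Ioi (a := 1 - u * I) (by simp) hr
  rw [one_div, inv_cpow _ _ (by simp [arg_ofReal_of_nonneg hr.le, pi_ne_zero.symm]),
    ← cpow_neg, neg_sub] at h
  rw [← h]
  refine setIntegral_congr_fun measurableSet_Ioi fun l _ => ?_
  rw [sub_sub_cancel_left, neg_mul, neg_mul, mul_comm]

lemma hasDerivAt_cpow_mul_I_sub_one_mul_Gamma {u : ℝ} (hu : u ≠ 0) {w : ℂ}
    (hw : w ∈ slitPlane) :
    HasDerivAt (fun z => (z ^ ((u : ℂ) * I) - 1) * Gamma (-u * I))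
      (-(w ^ ((u : ℂ) * I - 1) * Gamma (1 - u * I))) w := by
  have hΓ : Gamma (1 - u * I) = -u * I * Gamma (-u * I) := by
    rw [← Gamma_add_one _ (by simp [hu]), neg_mul, neg_add_eq_sub]
  refine (((hasDerivAt_id w).cpow_const hw).sub_const 1 |>.mul_const _).congr_deriv ?_
  rw [hΓ]
  simp only [id]
  ring

lemma mellinExpSub_ofReal {u : ℝ} (hu : u ≠ 0) {r : ℝ} (hr : 0 < r) :
    mellinExpSub r u = ((r : ℂ) ^ ((u : ℂ) * I) - 1) * Gamma (-u * I) := by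
  have hf (x : ℝ) (hx : 0 < x) : HasDerivAt (fun x : ℝ => mellinExpSub x u)
      (-((x : ℂ) ^ ((u : ℂ) * I - 1) * Gamma (1 - u * I))) x := by
    have h := (hasDerivAt_mellinExpSub (w₀ := x) (by simpa) u).comp_ofReal
    rwa [integral_neg, integral_cexp_neg_mul_ofReal_cpow hx] at h
  have hg (x : ℝ) (hx : 0 < x) := (hasDerivAt_cpow_mul_I_sub_one_mul_Gamma hu
    (ofReal_mem_slitPlane.2 hx)).comp_ofReal
  refine isOpen_Ioi.eqOn_of_deriv_eq isPreconnected_Ioi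
    (fun x hx => (hf x hx).differentiableAt.differentiableWithinAt)
    (fun x hx => (hg x hx).differentiableAt.differentiableWithinAt)
    (fun x hx => (hf x hx).deriv.trans (hg x hx).deriv.symm) (mem_Ioi.2 one_pos) ?_ hr
  simp [mellinExpSub]

lemma DifferentiableOn.eqOn_re_pos_of_ofReal_eq {E : Type*} [NormedAddCommGroup E]
    [NormedSpace ℂ E] [CompleteSpace E] {f g : ℂ → E}
    (hf : DifferentiableOn ℂ f {z | 0 < z.re}) (hg : DifferentiableOn ℂ g {z | 0 < z.re})
    (hfg : ∀ r : ℝ, 0 < r → f r = g r) : EqOn f g {z | 0 < z.re} := by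
  have hU : IsOpen {z : ℂ | 0 < z.re} := isOpen_lt continuous_const continuous_re
  have hreal : Tendsto ofReal (𝓝[≠] 1) (𝓝[≠] 1) :=
    continuous_ofReal.continuousWithinAt.tendsto_nhdsWithin fun x hx => by simpa using hx
  refine (hf.analyticOnNhd hU).eqOn_of_preconnected_of_frequently_eq (hg.analyticOnNhd hU)
    (convex_halfSpace_re_gt 0).isPreconnected (by simp) (hreal.frequently ?_)
  exact (((lt_mem_nhds one_pos).filter_mono nhdsWithin_le_nhds).mono hfg).frequently

lemma mellinExpSub_eq {u : ℝ} (hu : u ≠ 0) {w : ℂ} (hw : 0 < w.re) :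
    mellinExpSub w u = (w ^ ((u : ℂ) * I) - 1) * Gamma (-u * I) :=
  DifferentiableOn.eqOn_re_pos_of_ofReal_eq
    (fun _ hz => (hasDerivAt_mellinExpSub hz u).differentiableAt.differentiableWithinAt)
    (fun _ hz => (hasDerivAt_cpow_mul_I_sub_one_mul_Gamma hu
      (Or.inl hz)).differentiableAt.differentiableWithinAt)
    (fun _ hr => mellinExpSub_ofReal hu hr) hw

lemma norm_Gamma_mul_I_sq {u : ℝ} (hu : u ≠ 0) :
    ‖Gamma (u * I)‖ ^ 2 = π / (u * Real.sinh (π * u)) := by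
  have hsinh : Real.sinh (π * u) ≠ 0 := by simp [pi_ne_zero, hu]
  have hconj : Gamma (-u * I) = starRingEnd ℂ (Gamma (u * I)) := by
    rw [← Gamma_conj]; simp
  have hΓ : Gamma (1 - u * I) = -u * I * starRingEnd ℂ (Gamma (u * I)) := by
    rw [← hconj, ← Gamma_add_one _ (by simp [hu]), neg_mul, neg_add_eq_sub]
  have hrefl := Gamma_mul_Gamma_one_sub (u * I)
  rw [hΓ, show (π : ℂ) * (u * I) = (π * u : ℝ) * I by push_cast; ring, sin_mul_I,
    ← ofReal_sinh, mul_left_comm, mul_conj, normSq_eq_norm_sq,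
    eq_div_iff (mul_ne_zero (ofReal_ne_zero.2 hsinh) I_ne_zero)] at hrefl
  rw [eq_div_iff (mul_ne_zero hu hsinh)]
  apply ofReal_injective
  push_cast at hrefl ⊢
  linear_combination hrefl + ‖Gamma (u * I)‖ ^ 2 * u * Complex.sinh (π * u) * I_sq

lemma mul_exp_le_sinh_mul (x : ℝ) : x * rexp x ≤ Real.sinh x * (1 + 2 * x) := by
  have h2x : 1 + 2 * x ≤ rexp x * rexp x := by
    rw [← Real.exp_add]; linarith [add_one_le_exp (x + x)]
  have key : rexp (-x) * (1 + 2 * x) ≤ rexp x := by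
    calc rexp (-x) * (1 + 2 * x) ≤ rexp (-x) * (rexp x * rexp x) := by gcongr
      _ = rexp x := by rw [← mul_assoc, ← Real.exp_add, neg_add_cancel, Real.exp_zero, one_mul]
  rw [Real.sinh_eq]
  linarith

lemma sq_mul_norm_Gamma_mul_I_sq_le (u : ℝ) :
    u ^ 2 * ‖Gamma (u * I)‖ ^ 2 ≤ (1 + 2 * (π * |u|)) * rexp (-(π * |u|)) := by
  rcases eq_or_ne u 0 with rfl | hu
  · simp
  have habs : u * Real.sinh (π * u) = |u| * Real.sinh (π * |u|) := by
    rcases abs_cases u with ⟨h, _⟩ | ⟨h, _⟩ <;> simp [h]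
  have hx : 0 < π * |u| := by positivity
  have hsinh : 0 < Real.sinh (π * |u|) := Real.sinh_pos_iff.2 hx
  rw [norm_Gamma_mul_I_sq hu, habs, ← sq_abs, Real.exp_neg, ← div_eq_mul_inv,
    le_div_iff₀ (exp_pos _)]
  calc |u| ^ 2 * (π / (|u| * Real.sinh (π * |u|))) * rexp (π * |u|)
      = (π * |u|) * rexp (π * |u|) / Real.sinh (π * |u|) := by field_simp
    _ ≤ 1 + 2 * (π * |u|) := by
        rw [div_le_iff₀ hsinh, mul_comm _ (Real.sinh _)]
        exact mul_exp_le_sinh_mul _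

lemma abs_exp_mul_sub_one_mul_norm_Gamma_le (t u : ℝ) :
    |rexp (t * u) - 1| * ‖Gamma (-u * I)‖ ≤
      |t| * √(2 * π) * (1 + |u|) ^ ((1 : ℝ) / 2) * rexp ((|t| - π / 2) * |u|) := by
  have hA : |rexp (t * u) - 1| ≤ |t| * |u| * rexp (|t| * |u|) := by
    simpa [abs_mul] using abs_exp_sub_one_le_abs_mul_exp_abs (t * u)
  have hΓ := sq_mul_norm_Gamma_mul_I_sq_le (-u)
  rw [neg_sq, abs_neg, ofReal_neg] at hΓ
  refine (pow_le_pow_iff_left₀ (by positivity) (by positivity) two_ne_zero).1 ?_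
  have hrhs : (|t| * √(2 * π) * (1 + |u|) ^ ((1 : ℝ) / 2) * rexp ((|t| - π / 2) * |u|)) ^ 2 =
      t ^ 2 * (2 * π * (1 + |u|)) * (rexp (|t| * |u|) ^ 2 * rexp (-(π * |u|))) := by
    rw [← Real.sqrt_eq_rpow, mul_pow, mul_pow, mul_pow, sq_abs, Real.sq_sqrt (by positivity),
      Real.sq_sqrt (by positivity), ← Real.exp_nat_mul, ← Real.exp_nat_mul, ← Real.exp_add]
    ring_nf
  rw [hrhs]
  calc (|rexp (t * u) - 1| * ‖Gamma (-u * I)‖) ^ 2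
      = |rexp (t * u) - 1| ^ 2 * ‖Gamma (-u * I)‖ ^ 2 := mul_pow _ _ _
    _ ≤ (|t| * |u| * rexp (|t| * |u|)) ^ 2 * ‖Gamma (-u * I)‖ ^ 2 := by gcongr
    _ = t ^ 2 * rexp (|t| * |u|) ^ 2 * (u ^ 2 * ‖Gamma (-u * I)‖ ^ 2) := by
        rw [mul_pow, mul_pow, sq_abs, sq_abs]; ring
    _ ≤ t ^ 2 * rexp (|t| * |u|) ^ 2 * ((1 + 2 * (π * |u|)) * rexp (-(π * |u|))) := by gcongr
    _ ≤ t ^ 2 * (2 * π * (1 + |u|)) * (rexp (|t| * |u|) ^ 2 * rexp (-(π * |u|))) := by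
        rw [← mul_assoc, mul_right_comm (t ^ 2), mul_assoc]
        gcongr
        nlinarith [pi_gt_three, abs_nonneg u]

lemma cexp_mul_I_cpow_mul_I {t : ℝ} (ht : |t| < π) (u : ℝ) :
    cexp (t * I) ^ ((u : ℂ) * I) = ↑(rexp (-(t * u))) := by
  have him : (↑t * I).im = t := by simp
  rw [cpow_def_of_ne_zero (exp_ne_zero _), log_exp (by linarith [neg_abs_le t, him])
    (by linarith [le_abs_self t, him]), ofReal_exp]
  congr 1
  push_cast
  linear_combination (t : ℂ) * u * I_sq

/-- for `0 < θ < π/2` there exists `C > 0` such that the Mellin transform of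
`m_{±θ}(λ) = e^{-e^{±iθ}λ} - e^{-λ}` satisfies
`|[ℳ m_{±θ}](u)| ≤ C (1+|u|)^{1/2} e^{(θ-π/2)|u|}` for all `u ∈ ℝ`. -/
theorem stmt9 (θ : ℝ) (hθ0 : 0 < θ) (hθ : θ < π / 2) (ε : ℝ) (hε : ε = 1 ∨ ε = -1) :
    ∃ C : ℝ, 0 < C ∧ ∀ u : ℝ,
      ‖∫ l in Set.Ioi (0:ℝ),
          (Complex.exp (-(Complex.exp ((ε : ℂ) * (θ : ℂ) * Complex.I)) * (l : ℂ)) -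
            Complex.exp (-(l : ℂ))) * (l : ℂ) ^ (-(u : ℂ) * Complex.I) / l‖ ≤
        C * (1 + |u|) ^ ((1 : ℝ) / 2) * Real.exp ((θ - π / 2) * |u|) := by
  have hεθ : |ε * θ| = θ := by rcases hε with rfl | rfl <;> simp [hθ0.le]
  set a := cexp (↑(ε * θ) * I)
  have ha : 0 < a.re := by
    rw [exp_ofReal_mul_I_re]
    exact Real.cos_pos_of_mem_Ioo (abs_lt.1 (hεθ.trans_lt hθ))
  refine ⟨θ * √(2 * π) + ‖a - 1‖ / min a.re 1, by positivity, fun u => ?_⟩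
  rw [← ofReal_mul]
  change ‖mellinExpSub a u‖ ≤ _
  rcases eq_or_ne u 0 with rfl | hu
  · simp only [abs_zero, add_zero, Real.one_rpow, mul_zero, Real.exp_zero, mul_one]
    exact (norm_mellinExpSub_le ha 0).trans (le_add_of_nonneg_left (by positivity))
  rw [mellinExpSub_eq hu ha, cexp_mul_I_cpow_mul_I (hεθ.trans_lt (by linarith)), norm_mul,
    ← ofReal_one, ← ofReal_sub, norm_real, Real.norm_eq_abs, ← neg_mul]
  calc |rexp (-(ε * θ) * u) - 1| * ‖Gamma (-u * I)‖
      ≤ θ * √(2 * π) * (1 + |u|) ^ ((1 : ℝ) / 2) * rexp ((θ - π / 2) * |u|) := by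
        simpa [abs_neg, hεθ] using abs_exp_mul_sub_one_mul_norm_Gamma_le (-(ε * θ)) u
    _ ≤ _ := by gcongr; exact le_add_of_nonneg_right (by positivity)
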